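/- arXiv:1805.08645 — 4 statements merged into one kernel-verified Lean document; each statement's English description precedes it below -/
import Mathlib

section
/- Let r = 1.26 and let d ≥ r^k > 0 with k ≥ 0, and n ≥ 2. If the expected distance traveled is at most (r+2)·n·r^k/(r²-1) + (r+2)·n^{1.67}·r^k/(r²-1) + 2·n^{0.67}·r^k·(r+2)/((2-r²)·(log₂ n)!), then dividing by (n-1)·d yields a bound that is O(n^{0.67}) as n → ∞ (with d ≥ r^k). -/
set_option maxHeartbeats 800000 in
/-- With `r = 1.26`, `d ≥ r^k > 0`, `k ≥ 0`, `n ≥ 2`: dividing the total expected-distance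
bound by `(n-1)·d` yields a quantity that is `O(n^{0.67})`:
there is a constant `Cst > 0` with the ratio bounded by `Cst · n^{0.67}` for all `n ≥ 2`. -/
theorem stmt_10 :
    ∃ Cst : ℝ, 0 < Cst ∧ ∀ n : ℕ, 2 ≤ n → ∀ k d : ℝ, 0 ≤ k →
      (1.26 : ℝ) ^ k ≤ d →
      ((((1.26 : ℝ) + 2) * n * (1.26 : ℝ) ^ k / ((1.26 : ℝ) ^ 2 - 1) +
          ((1.26 : ℝ) + 2) * (n : ℝ) ^ (1.67 : ℝ) * (1.26 : ℝ) ^ k / ((1.26 : ℝ) ^ 2 - 1) +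
          2 * (n : ℝ) ^ (0.67 : ℝ) * (1.26 : ℝ) ^ k * ((1.26 : ℝ) + 2) /
            ((2 - (1.26 : ℝ) ^ 2) * (Nat.factorial ⌊Real.logb 2 n⌋₊))) /
        (((n : ℝ) - 1) * d)) ≤ Cst * (n : ℝ) ^ (0.67 : ℝ) := by
  refine ⟨100, by norm_num, ?_⟩
  intro n hn k d hk hd
  set N : ℝ := (n : ℝ) with hN
  have hN2 : (2:ℝ) ≤ N := by rw [hN]; exact_mod_cast hn
  have hrk : (0:ℝ) < (1.26:ℝ) ^ k := Real.rpow_pos_of_pos (by norm_num) k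
  have hd0 : (0:ℝ) < d := lt_of_lt_of_le hrk hd
  set F : ℝ := (Nat.factorial ⌊Real.logb 2 n⌋₊ : ℝ) with hFdef
  have hF : (1:ℝ) ≤ F := by
    rw [hFdef]
    exact_mod_cast Nat.one_le_iff_ne_zero.mpr (Nat.factorial_ne_zero ⌊Real.logb 2 ↑n⌋₊)
  have hF0 : (0:ℝ) < F := by linarith
  have hA : (1:ℝ) ≤ N ^ (0.67:ℝ) :=
    Real.one_le_rpow (by linarith) (by norm_num)
  have hA0 : (0:ℝ) < N ^ (0.67:ℝ) := by linarith
  have h167 : N ^ (1.67:ℝ) = N * N ^ (0.67:ℝ) := by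
    rw [show (1.67:ℝ) = 1 + 0.67 by norm_num, Real.rpow_add (by linarith : (0:ℝ) < N),
      Real.rpow_one]
  have hden : (0:ℝ) < (N - 1) * d := by
    have : (0:ℝ) < N - 1 := by linarith
    positivity
  rw [div_le_iff₀ hden]
  set t : ℝ := N ^ (0.67:ℝ)
  have hS : ((1.26:ℝ) + 2) * N * (1.26:ℝ) ^ k / ((1.26:ℝ) ^ 2 - 1) +
      ((1.26:ℝ) + 2) * N ^ (1.67:ℝ) * (1.26:ℝ) ^ k / ((1.26:ℝ) ^ 2 - 1) +
      2 * t * (1.26:ℝ) ^ k * ((1.26:ℝ) + 2) / ((2 - (1.26:ℝ) ^ 2) * F)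
      = (1.26:ℝ) ^ k * (((1.26:ℝ) + 2) * N / ((1.26:ℝ) ^ 2 - 1) +
        ((1.26:ℝ) + 2) * N ^ (1.67:ℝ) / ((1.26:ℝ) ^ 2 - 1) +
        2 * t * ((1.26:ℝ) + 2) / ((2 - (1.26:ℝ) ^ 2) * F)) := by
    field_simp
  rw [hS]
  have hSpos : (0:ℝ) ≤ ((1.26:ℝ) + 2) * N / ((1.26:ℝ) ^ 2 - 1) +
      ((1.26:ℝ) + 2) * N ^ (1.67:ℝ) / ((1.26:ℝ) ^ 2 - 1) +
      2 * t * ((1.26:ℝ) + 2) / ((2 - (1.26:ℝ) ^ 2) * F) := by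
    have h1 : (0:ℝ) < (1.26:ℝ) ^ 2 - 1 := by norm_num
    have h2 : (0:ℝ) < 2 - (1.26:ℝ) ^ 2 := by norm_num
    have hNpos : (0:ℝ) ≤ N ^ (1.67:ℝ) := by positivity
    positivity
  have step1 : (1.26:ℝ) ^ k * (((1.26:ℝ) + 2) * N / ((1.26:ℝ) ^ 2 - 1) +
      ((1.26:ℝ) + 2) * N ^ (1.67:ℝ) / ((1.26:ℝ) ^ 2 - 1) +
      2 * t * ((1.26:ℝ) + 2) / ((2 - (1.26:ℝ) ^ 2) * F))
      ≤ d * (((1.26:ℝ) + 2) * N / ((1.26:ℝ) ^ 2 - 1) +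
      ((1.26:ℝ) + 2) * N ^ (1.67:ℝ) / ((1.26:ℝ) ^ 2 - 1) +
      2 * t * ((1.26:ℝ) + 2) / ((2 - (1.26:ℝ) ^ 2) * F)) :=
    mul_le_mul_of_nonneg_right hd hSpos
  refine step1.trans ?_
  have hterm3 : 2 * t * ((1.26:ℝ) + 2) / ((2 - (1.26:ℝ) ^ 2) * F) ≤ 16 * t := by
    rw [div_le_iff₀ (by nlinarith : (0:ℝ) < (2 - (1.26:ℝ) ^ 2) * F)]
    nlinarith
  have hS2 : ((1.26:ℝ) + 2) * N / ((1.26:ℝ) ^ 2 - 1) +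
      ((1.26:ℝ) + 2) * N ^ (1.67:ℝ) / ((1.26:ℝ) ^ 2 - 1) +
      2 * t * ((1.26:ℝ) + 2) / ((2 - (1.26:ℝ) ^ 2) * F) ≤ 100 * t * (N - 1) := by
    rw [h167]
    have h1 : ((1.26:ℝ) + 2) * N / ((1.26:ℝ) ^ 2 - 1) ≤ 6 * N := by
      rw [div_le_iff₀ (by norm_num : (0:ℝ) < (1.26:ℝ) ^ 2 - 1)]
      nlinarith
    have h2 : ((1.26:ℝ) + 2) * (N * t) / ((1.26:ℝ) ^ 2 - 1) ≤ 6 * (N * t) := by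
      rw [div_le_iff₀ (by norm_num : (0:ℝ) < (1.26:ℝ) ^ 2 - 1)]
      nlinarith
    have ht0 : (0:ℝ) ≤ t := by linarith
    have h3 : 6 * N ≤ 6 * (N * t) := by nlinarith
    have h4 : 16 * t ≤ 8 * (N * t) := by nlinarith
    have h5 : 26 * (N * t) ≤ 100 * t * (N - 1) := by nlinarith
    linarith
  calc d * (((1.26:ℝ) + 2) * N / ((1.26:ℝ) ^ 2 - 1) +
      ((1.26:ℝ) + 2) * N ^ (1.67:ℝ) / ((1.26:ℝ) ^ 2 - 1) +
      2 * t * ((1.26:ℝ) + 2) / ((2 - (1.26:ℝ) ^ 2) * F))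
      ≤ d * (100 * t * (N - 1)) := mul_le_mul_of_nonneg_left hS2 (le_of_lt hd0)
    _ = 100 * t * ((N - 1) * d) := by ring
end

section
/- Let r = 1.26, let n ≥ 2, let 2d > 0 be the initial spacing, and suppose i*, j* are integers with i* ≥ j* ≥ k/2 + 2.75·log₂ n + 3 where d = r^k. Then r^{2i*+1} ≥ (n-1)·2d + r^{2j*}. -/
/-- Rendezvous condition for event `E₂*`: with `r = 1.26`, `n ≥ 2`, `d = r^k`, and integers
`i* ≥ j* ≥ k/2 + 2.75·log₂ n + 3`, we have `r^{2i*+1} ≥ (n-1)·2d + r^{2j*}`. -/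
theorem stmt_11 (k : ℝ) (hk : 0 ≤ k) (n : ℕ) (hn : 2 ≤ n) (d : ℝ)
    (hd : d = (1.26 : ℝ) ^ k) (i j : ℤ)
    (hj : k / 2 + 2.75 * Real.logb 2 n + 3 ≤ (j : ℝ)) (hij : j ≤ i) :
    ((n : ℝ) - 1) * (2 * d) + (1.26 : ℝ) ^ (2 * j) ≤ (1.26 : ℝ) ^ (2 * i + 1) := by
  have hr0 : (0:ℝ) < 1.26 := by norm_num
  have hr1 : (1:ℝ) ≤ 1.26 := by norm_num
  have hn0 : (0:ℝ) < n := by positivity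
  have hn2 : (2:ℝ) ≤ n := by exact_mod_cast hn
  set L := Real.logb 2 n with hL
  have hL1 : 1 ≤ L := by
    have := Real.logb_le_logb_of_le (b := 2) (by norm_num) (by norm_num) hn2
    simpa using this
  have hc : (3/11 : ℝ) ≤ Real.logb 2 1.26 := by
    rw [Real.le_logb_iff_rpow_le (by norm_num) (by norm_num)]
    have h8 : ((2:ℝ) ^ ((3:ℝ)/11)) ^ (11:ℕ) = 8 := by
      rw [← Real.rpow_natCast ((2:ℝ) ^ ((3:ℝ)/11)) 11, ← Real.rpow_mul (by norm_num)]
      norm_num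
    have h11 : ((2:ℝ) ^ ((3:ℝ)/11)) ^ (11:ℕ) ≤ (1.26:ℝ) ^ (11:ℕ) := by
      rw [h8]; norm_num
    exact le_of_pow_le_pow_left₀ (by norm_num) (by norm_num) h11
  have hid : (1.26:ℝ) ^ ((5.5:ℝ) * L) = (n:ℝ) ^ ((5.5:ℝ) * Real.logb 2 1.26) := by
    have e1 : (1.26:ℝ) = (2:ℝ) ^ Real.logb 2 1.26 :=
      (Real.rpow_logb (by norm_num) (by norm_num) (by norm_num)).symm
    have e2 : (n:ℝ) = (2:ℝ) ^ L := (Real.rpow_logb (by norm_num) (by norm_num) hn0).symm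
    conv_lhs => rw [e1]
    rw [e2, ← Real.rpow_mul (by norm_num), ← Real.rpow_mul (by norm_num)]
    ring_nf
  have hs : 2 * ((n:ℝ) - 1) ≤ (n:ℝ) ^ ((1.5:ℝ)) := by
    have h15 : (n:ℝ) ^ ((1.5:ℝ)) = (n:ℝ) * Real.sqrt n := by
      rw [show (1.5:ℝ) = 1 + 1/2 by norm_num, Real.rpow_add hn0, Real.rpow_one,
        Real.sqrt_eq_rpow]
    rw [h15]
    have hsq : Real.sqrt n * Real.sqrt n = (n:ℝ) := Real.mul_self_sqrt hn0.le
    have hs0 : (0:ℝ) ≤ Real.sqrt n := Real.sqrt_nonneg _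
    nlinarith [sq_nonneg (Real.sqrt n - 4/3), sq_nonneg (Real.sqrt n - 1), sq_nonneg ((n:ℝ) - 2)]
  -- main chain
  have hmono : (3:ℝ)/2 ≤ (5.5:ℝ) * Real.logb 2 1.26 := by nlinarith
  have hnn : (1:ℝ) ≤ (n:ℝ) := by linarith
  have h1 : 2 * ((n:ℝ) - 1) ≤ (n:ℝ) ^ ((5.5:ℝ) * Real.logb 2 1.26) := by
    calc 2 * ((n:ℝ) - 1) ≤ (n:ℝ) ^ ((1.5:ℝ)) := hs
      _ ≤ _ := Real.rpow_le_rpow_of_exponent_le hnn (by linarith)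
  -- r^{2j} ≥ r^k * r^{5.5L} * r^6
  have hj2 : k + 5.5 * L + 6 ≤ 2 * (j:ℝ) := by linarith
  have h2 : (1.26:ℝ) ^ (k + 5.5 * L + 6) ≤ (1.26:ℝ) ^ ((2*(j:ℝ))) :=
    Real.rpow_le_rpow_of_exponent_le hr1 hj2
  have hsplit : (1.26:ℝ) ^ (k + 5.5 * L + 6)
      = (1.26:ℝ) ^ k * (1.26:ℝ) ^ ((5.5:ℝ) * L) * (1.26:ℝ) ^ (6:ℕ) := by
    rw [Real.rpow_add hr0, Real.rpow_add hr0, show ((6:ℝ)) = ((6:ℕ):ℝ) by norm_num, Real.rpow_natCast]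
  -- key inequality
  have hkey : ((n:ℝ) - 1) * (2 * d) ≤ 0.26 * (1.26:ℝ) ^ ((2*(j:ℝ))) := by
    have hpk : (0:ℝ) < (1.26:ℝ) ^ k := Real.rpow_pos_of_pos hr0 _
    have hq : 2 * ((n:ℝ) - 1) ≤ 0.26 * ((1.26:ℝ) ^ ((5.5:ℝ) * L) * (1.26:ℝ) ^ (6:ℕ)) := by
      have h6 : (1:ℝ) ≤ 0.26 * (1.26:ℝ) ^ (6:ℕ) := by norm_num
      have hp1 : (0:ℝ) ≤ (n:ℝ) ^ ((5.5:ℝ) * Real.logb 2 1.26) := by positivity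
      have := h1
      rw [hid]
      nlinarith
    calc ((n:ℝ) - 1) * (2 * d) = (1.26:ℝ) ^ k * (2 * ((n:ℝ)-1)) := by rw [hd]; ring
      _ ≤ (1.26:ℝ) ^ k * (0.26 * ((1.26:ℝ) ^ ((5.5:ℝ) * L) * (1.26:ℝ) ^ (6:ℕ))) := by
          exact mul_le_mul_of_nonneg_left hq hpk.le
      _ = 0.26 * ((1.26:ℝ) ^ k * (1.26:ℝ) ^ ((5.5:ℝ) * L) * (1.26:ℝ) ^ (6:ℕ)) := by ring
      _ = 0.26 * (1.26:ℝ) ^ (k + 5.5 * L + 6) := by rw [hsplit]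
      _ ≤ _ := by nlinarith
  -- convert zpow to rpow
  have hz : ((1.26:ℝ) ^ (2*j) : ℝ) = (1.26:ℝ) ^ ((2*(j:ℝ))) := by
    rw [show (2*(j:ℝ)) = ((2*j : ℤ) : ℝ) by push_cast; ring, Real.rpow_intCast]
  have hzi : (1.26:ℝ) * (1.26:ℝ) ^ (2*j) ≤ (1.26:ℝ) ^ (2*i+1) := by
    have : (1.26:ℝ) ^ (2*j+1) ≤ (1.26:ℝ) ^ (2*i+1) :=
      zpow_le_zpow_right₀ hr1 (by omega)
    calc (1.26:ℝ) * (1.26:ℝ) ^ (2*j) = (1.26:ℝ) ^ (2*j+1) := by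
          rw [zpow_add_one₀ (by norm_num : (1.26:ℝ) ≠ 0)]; ring
      _ ≤ _ := this
  have hfin : ((n:ℝ) - 1) * (2 * d) ≤ 0.26 * (1.26:ℝ) ^ (2*j) := by rw [hz]; exact hkey
  nlinarith [hfin, hzi]
end

section
/- Let r = 1.26, n ≥ 2, d = r^k with k ≥ 0, α* = k/2 + 2.75·log₂ n + 3, and let i*, j* be integers with i* ≥ α* and Δ = i* - j* ≥ 1. Then r^{2i*} ≥ (n-1)·2d + r^{2j*}. -/
/-- Rendezvous condition for event `E₃*`: with `r = 1.26`, `n ≥ 2`, `d = r^k`,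
`α* = k/2 + 2.75·log₂ n + 3`, and integers `i* ≥ α*`, `Δ = i* - j* ≥ 1`, we have
`r^{2i*} ≥ (n-1)·2d + r^{2j*}`. -/
theorem stmt_12 (k : ℝ) (hk : 0 ≤ k) (n : ℕ) (hn : 2 ≤ n) (d : ℝ)
    (hd : d = (1.26 : ℝ) ^ k) (i j : ℤ)
    (hi : k / 2 + 2.75 * Real.logb 2 n + 3 ≤ (i : ℝ)) (hΔ : 1 ≤ i - j) :
    ((n : ℝ) - 1) * (2 * d) + (1.26 : ℝ) ^ (2 * j) ≤ (1.26 : ℝ) ^ (2 * i) := by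
  have hr0 : (0:ℝ) < 1.26 := by norm_num
  have hr1 : (1:ℝ) ≤ 1.26 := by norm_num
  have hn2 : (2:ℝ) ≤ (n:ℝ) := by exact_mod_cast hn
  have hn0 : (0:ℝ) < (n:ℝ) := by linarith
  set L := Real.logb 2 (n:ℝ) with hLdef
  have hL0 : 0 ≤ L := Real.logb_nonneg (by norm_num) (by linarith)
  have hji : (j:ℝ) + 1 ≤ (i:ℝ) := by exact_mod_cast (by linarith : j + 1 ≤ i)
  have hzj : (1.26:ℝ) ^ (2*j) = (1.26:ℝ) ^ ((2*(j:ℝ)) : ℝ) := by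
    rw [← Real.rpow_intCast 1.26 (2*j)]; push_cast; ring_nf
  have hzi : (1.26:ℝ) ^ (2*i) = (1.26:ℝ) ^ ((2*(i:ℝ)) : ℝ) := by
    rw [← Real.rpow_intCast 1.26 (2*i)]; push_cast; ring_nf
  rw [hzj, hzi, hd]
  -- log bound : 1/3 ≤ logb 2 1.26
  have hlog : (1:ℝ)/3 ≤ Real.logb 2 (1.26:ℝ) := by
    rw [Real.le_logb_iff_rpow_le (by norm_num) (by norm_num)]
    have h3 : ((2:ℝ) ^ ((1:ℝ)/3)) ^ (3:ℕ) ≤ (1.26:ℝ) ^ (3:ℕ) := by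
      rw [← Real.rpow_natCast ((2:ℝ) ^ ((1:ℝ)/3)) 3, ← Real.rpow_mul (by norm_num)]
      norm_num
    exact le_of_pow_le_pow_left₀ (by norm_num) (by norm_num) h3
  -- P := 1.26 ^ (5.5 L) ≥ (3/2) * n
  set P := (1.26:ℝ) ^ (5.5 * L) with hPdef
  have hP : (3/2) * (n:ℝ) ≤ P := by
    have e1 : (1.26:ℝ) = 2 ^ Real.logb 2 (1.26:ℝ) :=
      (Real.rpow_logb (by norm_num) (by norm_num) hr0).symm
    have e2 : P = 2 ^ (Real.logb 2 (1.26:ℝ) * (5.5 * L)) := by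
      rw [hPdef]; conv_lhs => rw [e1]
      rw [← Real.rpow_mul (by norm_num)]
    have e3 : (2:ℝ) ^ ((1/3) * (5.5 * L)) ≤ P := by
      rw [e2]
      apply Real.rpow_le_rpow_of_exponent_le (by norm_num)
      nlinarith
    have e4 : (2:ℝ) ^ ((1/3) * (5.5 * L)) = ((n:ℝ)) ^ ((11:ℝ)/6) := by
      have : (1/3 : ℝ) * (5.5 * L) = L * (11/6) := by ring
      rw [this, Real.rpow_mul (by norm_num), Real.rpow_logb (by norm_num) (by norm_num) hn0]
    rw [e4] at e3
    have e5 : ((n:ℝ)) ^ ((11:ℝ)/6) = (n:ℝ) * (n:ℝ) ^ ((5:ℝ)/6) := by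
      nth_rewrite 2 [← Real.rpow_one (n:ℝ)]
      rw [← Real.rpow_add hn0]
      norm_num
    have e6 : (3/2 : ℝ) ≤ (n:ℝ) ^ ((5:ℝ)/6) := by
      have h56 : (2:ℝ) ^ ((5:ℝ)/6) ≤ (n:ℝ) ^ ((5:ℝ)/6) :=
        Real.rpow_le_rpow (by norm_num) hn2 (by norm_num)
      have h32 : (3/2:ℝ) ≤ (2:ℝ) ^ ((5:ℝ)/6) := by
        have h6 : ((3/2:ℝ)) ^ (6:ℕ) ≤ ((2:ℝ) ^ ((5:ℝ)/6)) ^ (6:ℕ) := by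
          rw [← Real.rpow_natCast ((2:ℝ) ^ ((5:ℝ)/6)) 6, ← Real.rpow_mul (by norm_num)]
          norm_num
        exact le_of_pow_le_pow_left₀ (by norm_num) (by positivity) h6
      linarith
    rw [e5] at e3
    nlinarith
  -- main chain
  have hkpos : (0:ℝ) < (1.26:ℝ) ^ k := Real.rpow_pos_of_pos hr0 k
  have h1 : (1.26:ℝ) ^ (2*(j:ℝ)) ≤ (1.26:ℝ) ^ (2*(i:ℝ) - 2) :=
    Real.rpow_le_rpow_of_exponent_le hr1 (by linarith)
  have h2 : (1.26:ℝ) ^ (k + 5.5*L + 4) ≤ (1.26:ℝ) ^ (2*(i:ℝ) - 2) :=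
    Real.rpow_le_rpow_of_exponent_le hr1 (by rw [hLdef]; nlinarith [hi])
  have h2' : (1.26:ℝ) ^ (k + 5.5*L + 4) = (1.26:ℝ)^k * P * 2.52047376 := by
    rw [Real.rpow_add hr0, Real.rpow_add hr0, hPdef]
    have : (1.26:ℝ) ^ ((4:ℝ)) = 2.52047376 := by
      rw [show ((4:ℝ)) = ((4:ℕ):ℝ) by norm_num, Real.rpow_natCast]; norm_num
    rw [this]
  have hrw : (1.26:ℝ) ^ (2*(i:ℝ)) = (1.26:ℝ) ^ (2*(i:ℝ) - 2) * 1.5876 := by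
    rw [show (1.5876:ℝ) = (1.26:ℝ)^((2:ℝ)) by
      rw [show (2:ℝ)=((2:ℕ):ℝ) by norm_num, Real.rpow_natCast]; norm_num]
    rw [← Real.rpow_add hr0]; norm_num
  rw [h2'] at h2
  rw [hrw]
  have hPk : (1.26:ℝ)^k * ((3/2) * (n:ℝ)) ≤ (1.26:ℝ)^k * P :=
    mul_le_mul_of_nonneg_left hP hkpos.le
  nlinarith [mul_pos hkpos hn0, h1, h2, hPk]
end

section
/- Let r = 1.26, n ≥ 2, d = r^k with k ≥ 0, α* = k/2 + 2.75·log₂ n + 3, and let i*, j* be integers with i* ≥ α* and i* - j* ≥ 1. Then r^{2i*+1} ≥ (n-1)·2d + r^{2j*+2}. -/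
lemma aux_sqrt (x : ℝ) (hx : 0 ≤ x) : 2 * (x - 1) ≤ x * Real.sqrt x := by
  have ht : 0 ≤ Real.sqrt x := Real.sqrt_nonneg x
  have hsq : Real.sqrt x ^ 2 = x := Real.sq_sqrt hx
  nlinarith [mul_nonneg ht (sq_nonneg (Real.sqrt x - 4/3)), sq_nonneg (Real.sqrt x - 4/3)]

/-- Rendezvous condition for event `E₄*`: with `r = 1.26`, `n ≥ 2`, `d = r^k`,
`α* = k/2 + 2.75·log₂ n + 3`, and integers `i* ≥ α*`, `i* - j* ≥ 1`, we have
`r^{2i*+1} ≥ (n-1)·2d + r^{2j*+2}`. -/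
theorem stmt_13 (k : ℝ) (hk : 0 ≤ k) (n : ℕ) (hn : 2 ≤ n) (d : ℝ)
    (hd : d = (1.26 : ℝ) ^ k) (i j : ℤ)
    (hi : k / 2 + 2.75 * Real.logb 2 n + 3 ≤ (i : ℝ)) (hΔ : 1 ≤ i - j) :
    ((n : ℝ) - 1) * (2 * d) + (1.26 : ℝ) ^ (2 * j + 2) ≤ (1.26 : ℝ) ^ (2 * i + 1) := by
  set r : ℝ := 1.26 with hr
  have hr1 : (1:ℝ) < r := by norm_num [hr]
  have hr0 : (0:ℝ) < r := by linarith
  set L : ℝ := Real.logb 2 n with hL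
  have hn0 : (0:ℝ) < n := by positivity
  have hn2 : (2:ℝ) ≤ n := by exact_mod_cast hn
  have hL1 : (1:ℝ) ≤ L := by
    rw [hL, show (1:ℝ) = Real.logb 2 2 by simp]
    exact Real.logb_le_logb_of_le (by norm_num) (by norm_num) hn2
  have hnL : (2:ℝ) ^ L = n := Real.rpow_logb (by norm_num) (by norm_num) hn0
  -- step 1: bound r^(2j+2) by r^(2i)
  have h1 : r ^ (2 * j + 2) ≤ r ^ (2 * i) :=
    zpow_le_zpow_right₀ hr1.le (by omega)
  -- step 2: r^(2i+1) = r^(2i) * r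
  have h2 : r ^ (2 * i + 1) = r ^ (2 * i) * r := by
    rw [zpow_add_one₀ (ne_of_gt hr0)]
  -- step 3: bound 2(n-1) r^k ≤ 0.26 * r^(2i)
  have hzi : r ^ (2 * i) = r ^ ((2 * (i:ℝ))) := by
    rw [show (2 * (i:ℝ)) = ((2 * i : ℤ) : ℝ) by push_cast; ring, Real.rpow_intCast]
  have hexp : k + 5.5 * L + 6 ≤ 2 * (i:ℝ) := by linarith
  have h3 : r ^ (k + 5.5 * L + 6) ≤ r ^ (2 * (i:ℝ)) :=
    Real.rpow_le_rpow_of_exponent_le hr1.le hexp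
  have hsplit : r ^ (k + 5.5 * L + 6) = r ^ k * r ^ (5.5 * L) * r ^ (6:ℝ) := by
    rw [Real.rpow_add hr0, Real.rpow_add hr0]
  -- r^(5.5 L) ≥ n^(3/2)
  have hmid : (n:ℝ) ^ ((3:ℝ)/2) ≤ r ^ (5.5 * L) := by
    have e1 : r ^ (5.5 * L) = (r ^ (11:ℝ)) ^ (L/2) := by
      rw [show (5.5 : ℝ) * L = 11 * (L / 2) by ring, Real.rpow_mul hr0.le]
    have e2 : (n:ℝ) ^ ((3:ℝ)/2) = ((8:ℝ)) ^ (L/2) := by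
      rw [show (8:ℝ) = (2:ℝ) ^ (3:ℝ) by
            rw [show (3:ℝ) = ((3:ℕ):ℝ) by norm_num, Real.rpow_natCast]; norm_num,
          ← Real.rpow_mul (by norm_num : (0:ℝ) ≤ 2),
          show (3:ℝ) * (L/2) = L * (3/2) by ring,
          Real.rpow_mul (by norm_num : (0:ℝ) ≤ 2), hnL]
    rw [e1, e2]
    apply Real.rpow_le_rpow (by norm_num) _ (by linarith)
    rw [show (11:ℝ) = ((11:ℕ):ℝ) by norm_num, Real.rpow_natCast]
    norm_num [hr]
  have hr6 : (1:ℝ) ≤ 0.26 * r ^ (6:ℝ) := by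
    rw [show (6:ℝ) = ((6:ℕ):ℝ) by norm_num, Real.rpow_natCast]
    norm_num [hr]
  have hn32 : 2 * ((n:ℝ) - 1) ≤ (n:ℝ) ^ ((3:ℝ)/2) := by
    have h := aux_sqrt (n:ℝ) hn0.le
    have e : (n:ℝ) ^ ((3:ℝ)/2) = n * Real.sqrt n := by
      rw [show (3:ℝ)/2 = 1 + 1/2 by norm_num, Real.rpow_add hn0,
        Real.rpow_one, Real.sqrt_eq_rpow]
    linarith
  -- assemble
  have hrk : (0:ℝ) < r ^ k := Real.rpow_pos_of_pos hr0 k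
  have hfinal : ((n:ℝ) - 1) * (2 * d) ≤ 0.26 * r ^ (2 * i) := by
    rw [hd, hzi]
    have hb : r ^ k * (2 * ((n:ℝ) - 1)) ≤ r ^ k * ((n:ℝ) ^ ((3:ℝ)/2)) :=
      mul_le_mul_of_nonneg_left hn32 hrk.le
    have hc : r ^ k * ((n:ℝ) ^ ((3:ℝ)/2)) ≤ 0.26 * (r ^ k * r ^ (5.5 * L) * r ^ (6:ℝ)) := by
      have h4 := mul_le_mul_of_nonneg_left hmid hrk.le
      have hA : (0:ℝ) ≤ r ^ k * r ^ (5.5 * L) :=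
        mul_nonneg hrk.le (Real.rpow_pos_of_pos hr0 _).le
      have h5 := mul_le_mul_of_nonneg_left hr6 hA
      nlinarith [h4, h5]
    calc ((n:ℝ) - 1) * (2 * r ^ k) = r ^ k * (2 * ((n:ℝ) - 1)) := by ring
      _ ≤ r ^ k * ((n:ℝ) ^ ((3:ℝ)/2)) := hb
      _ ≤ 0.26 * (r ^ k * r ^ (5.5 * L) * r ^ (6:ℝ)) := hc
      _ = 0.26 * r ^ (k + 5.5 * L + 6) := by rw [hsplit]
      _ ≤ 0.26 * r ^ (2 * (i:ℝ)) := by linarith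
  calc ((n:ℝ) - 1) * (2 * d) + r ^ (2 * j + 2)
      ≤ 0.26 * r ^ (2 * i) + r ^ (2 * i) := add_le_add hfinal h1
    _ = r ^ (2 * i) * r := by rw [hr]; ring
    _ = r ^ (2 * i + 1) := h2.symm
end
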